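/- arXiv:1303.4542 — 4 statements merged into one kernel-verified Lean document; each statement's English description precedes it below -/
import Mathlib

section
/- Let (y_n) be defined by y_{n+1} = a·y_n·log(1/y_n) with 0 < a < 1 and y₀ ∈ [exp(−1/a), exp(−1)]. Then (y_n) is decreasing and converges to exp(−1/a); moreover, with b = log(1/min{y₀, a}), for all n ∈ ℕ one has y_n ≤ (a·b)^n · y₀ · n!. -/
/-!
Write `g x = a·x·log(1/x) = a·negMulLog x`. Since `x·log x` decreases on `[0, e⁻¹]`, `g` increases
there, and `e^{-1/a}` is a fixed point of `g`; on `I = [e^{-1/a}, e⁻¹]` moreover `log(1/x) ≤ 1/a`,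
i.e. `g x ≤ x`. Hence `g` maps `I` into itself, the orbit of `y₀` decreases in `I`, and its limit is
a fixed point of `g` in `I`, which can only be `e^{-1/a}`.

For the factorial bound, `log(1/x) ≥ 1` on `I` gives `y_{n+1} ≥ a·y_n`, so `y_n ≥ m^{n+1}` with
`m = min y₀ a`. Thus `log(1/y_n) ≤ (n+1)·b`, i.e. `y_{n+1} ≤ a·b·(n+1)·y_n`, which iterates to the
bound.
-/

open Real Set Filter Topology Function

lemma mul_log_one_div_eq_negMulLog (x : ℝ) : x * log (1 / x) = negMulLog x := by
  rw [one_div, log_inv, negMulLog]; ring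

lemma monotoneOn_negMulLog : MonotoneOn negMulLog (Icc 0 (exp (-1))) := by
  rw [negMulLog_eq_neg]; exact mul_log_strictAntiOn.antitoneOn.neg

lemma self_le_negMulLog {x : ℝ} (hx0 : 0 ≤ x) (hx : x ≤ exp (-1)) : x ≤ negMulLog x := by
  rcases hx0.eq_or_lt with rfl | hx0
  · simp
  have hlog : log x ≤ -1 := (log_le_iff_le_exp hx0).2 hx
  calc x = x * 1 := (mul_one x).symm
    _ ≤ x * -log x := by gcongr; linarith
    _ = negMulLog x := by rw [negMulLog]; ring

lemma negMulLog_le_of_pow_le {m x : ℝ} {k : ℕ} (hm : 0 < m) (hx : m ^ k ≤ x) :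
    negMulLog x ≤ k * log (1 / m) * x := by
  have hx0 : 0 < x := (pow_pos hm k).trans_le hx
  have hlog : k * log m ≤ log x := by
    rw [← log_pow]; exact log_le_log (pow_pos hm k) hx
  rw [negMulLog, one_div, log_inv]
  nlinarith

section Iteration

variable {a x : ℝ}

lemma mul_negMulLog_exp_neg_one_div (ha : a ≠ 0) :
    a * negMulLog (exp (-1 / a)) = exp (-1 / a) := by
  rw [negMulLog, log_exp]; field_simp

lemma eq_exp_neg_one_div_of_mul_negMulLog_eq (ha : a ≠ 0) (hx : 0 < x)
    (h : a * negMulLog x = x) : x = exp (-1 / a) := by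
  have hlog : a * log x = -1 := by
    rw [negMulLog] at h
    exact mul_left_cancel₀ hx.ne' (by linarith)
  rw [← exp_log hx, ← hlog, mul_div_cancel_left₀ _ ha]

lemma mul_negMulLog_le_self (ha : 0 < a) (hx : exp (-1 / a) ≤ x) :
    a * negMulLog x ≤ x := by
  have hx0 : 0 < x := (exp_pos _).trans_le hx
  have hlog : -1 / a ≤ log x := (le_log_iff_exp_le hx0).2 hx
  have hlog' : -1 ≤ a * log x := by rwa [div_le_iff₀' ha] at hlog
  rw [negMulLog]
  nlinarith

lemma mapsTo_mul_negMulLog (ha0 : 0 < a) (ha1 : a ≤ 1) :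
    MapsTo (fun x => a * negMulLog x) (Icc (exp (-1 / a)) (exp (-1)))
      (Icc (exp (-1 / a)) (exp (-1))) := by
  intro x ⟨hxl, hxu⟩
  have hfix_le : exp (-1 / a) ≤ exp (-1) :=
    exp_le_exp.2 (by rw [div_le_iff₀ ha0]; linarith)
  refine ⟨?_, (mul_negMulLog_le_self ha0 hxl).trans hxu⟩
  calc exp (-1 / a) = a * negMulLog (exp (-1 / a)) := (mul_negMulLog_exp_neg_one_div ha0.ne').symm
    _ ≤ a * negMulLog x := by
      gcongr
      exact monotoneOn_negMulLog ⟨(exp_pos _).le, hfix_le⟩ ⟨(exp_pos _).le.trans hxl, hxu⟩ hxl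

lemma antitone_iterate_mul_negMulLog (ha0 : 0 < a) (ha1 : a ≤ 1)
    (hx : x ∈ Icc (exp (-1 / a)) (exp (-1))) :
    Antitone fun n => (fun x => a * negMulLog x)^[n] x :=
  antitone_nat_of_succ_le fun n => by
    rw [iterate_succ_apply']
    exact mul_negMulLog_le_self ha0 ((mapsTo_mul_negMulLog ha0 ha1).iterate n hx).1

lemma tendsto_iterate_mul_negMulLog (ha0 : 0 < a) (ha1 : a ≤ 1)
    (hx : x ∈ Icc (exp (-1 / a)) (exp (-1))) :
    Tendsto (fun n => (fun x => a * negMulLog x)^[n] x) atTop (𝓝 (exp (-1 / a))) := by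
  set g : ℝ → ℝ := fun x => a * negMulLog x
  have hlower : ∀ n, exp (-1 / a) ≤ g^[n] x := fun n =>
    ((mapsTo_mul_negMulLog ha0 ha1).iterate n hx).1
  have hlim : Tendsto (fun n => g^[n] x) atTop (𝓝 (⨅ n, g^[n] x)) :=
    tendsto_atTop_ciInf (antitone_iterate_mul_negMulLog ha0 ha1 hx)
      ⟨_, forall_mem_range.2 hlower⟩
  have hfix : g (⨅ n, g^[n] x) = ⨅ n, g^[n] x :=
    isFixedPt_of_tendsto_iterate hlim (continuous_negMulLog.const_mul a).continuousAt
  rwa [eq_exp_neg_one_div_of_mul_negMulLog_eq ha0.ne'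
    ((exp_pos _).trans_le (le_ciInf hlower)) hfix] at hlim

end Iteration

section Growth

variable {y : ℕ → ℝ}

lemma pow_succ_le_of_mul_le_succ {m : ℝ} (hm : 0 ≤ m) (h0 : m ≤ y 0)
    (hstep : ∀ n, m * y n ≤ y (n + 1)) (n : ℕ) : m ^ (n + 1) ≤ y n := by
  induction n with
  | zero => simpa using h0
  | succ n ih => calc
      m ^ (n + 2) = m * m ^ (n + 1) := pow_succ' m (n + 1)
      _ ≤ m * y n := by gcongr
      _ ≤ y (n + 1) := hstep n

lemma le_pow_mul_factorial_of_le_mul_succ {c : ℝ} (hc : 0 ≤ c)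
    (hstep : ∀ n : ℕ, y (n + 1) ≤ c * (n + 1) * y n) (n : ℕ) :
    y n ≤ c ^ n * y 0 * n.factorial := by
  induction n with
  | zero => simp
  | succ n ih => calc
      y (n + 1) ≤ c * (n + 1) * y n := hstep n
      _ ≤ c * (n + 1) * (c ^ n * y 0 * n.factorial) := by gcongr
      _ = c ^ (n + 1) * y 0 * (n + 1).factorial := by
        rw [Nat.factorial_succ]; push_cast; ring

end Growth

/-- the sequence `y_{n+1} = a·y_n·log(1/y_n)` with `0 < a < 1` and
`y₀ ∈ [exp(−1/a), exp(−1)]` is decreasing and converges to `exp(−1/a)`; moreover,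
with `b = log(1/min{y₀, a})`, for all `n` one has `y_n ≤ (ab)^n·y₀·n!`. -/
theorem y_sequence (a : ℝ) (ha0 : 0 < a) (ha1 : a < 1)
    (y : ℕ → ℝ)
    (hy0l : Real.exp (-1 / a) ≤ y 0) (hy0u : y 0 ≤ Real.exp (-1))
    (hrec : ∀ n, y (n + 1) = a * y n * Real.log (1 / y n))
    (b : ℝ) (hb : b = Real.log (1 / min (y 0) a)) :
    (∀ n, y (n + 1) ≤ y n) ∧
      Filter.Tendsto y Filter.atTop (nhds (Real.exp (-1 / a))) ∧
      ∀ n : ℕ, y n ≤ (a * b) ^ n * y 0 * n.factorial := by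
  set g : ℝ → ℝ := fun x => a * negMulLog x
  have hy0 : y 0 ∈ Icc (exp (-1 / a)) (exp (-1)) := ⟨hy0l, hy0u⟩
  have hstep : ∀ n, y (n + 1) = g (y n) := fun n => by
    rw [hrec, mul_assoc, mul_log_one_div_eq_negMulLog]
  have hy : y = fun n => g^[n] (y 0) := funext fun n => by
    induction n with
    | zero => rfl
    | succ n ih => rw [hstep, ih, iterate_succ_apply']
  have hmem : ∀ n, y n ∈ Icc (exp (-1 / a)) (exp (-1)) := fun n => by
    rw [hy]; exact (mapsTo_mul_negMulLog ha0 ha1.le).iterate n hy0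
  refine ⟨fun n => ?_, ?_, ?_⟩
  · rw [hy]; exact antitone_iterate_mul_negMulLog ha0 ha1.le hy0 n.le_succ
  · rw [hy]; exact tendsto_iterate_mul_negMulLog ha0 ha1.le hy0
  set m := min (y 0) a
  have hm0 : 0 < m := lt_min ((exp_pos _).trans_le hy0l) ha0
  have hpos : ∀ n, 0 < y n := fun n => (exp_pos _).trans_le (hmem n).1
  have hlower : ∀ n, m ^ (n + 1) ≤ y n :=
    pow_succ_le_of_mul_le_succ hm0.le (min_le_left _ _) fun n => calc
      m * y n ≤ a * y n := mul_le_mul_of_nonneg_right (min_le_right _ _) (hpos n).le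
      _ ≤ a * negMulLog (y n) := by gcongr; exact self_le_negMulLog (hpos n).le (hmem n).2
      _ = y (n + 1) := (hstep n).symm
  have hb0 : 0 ≤ b := by
    rw [hb]; exact log_nonneg (one_le_one_div hm0 ((min_le_right _ _).trans ha1.le))
  refine le_pow_mul_factorial_of_le_mul_succ (by positivity) fun n => ?_
  calc y (n + 1) = a * negMulLog (y n) := hstep n
    _ ≤ a * ((n + 1 : ℕ) * b * y n) := by gcongr; exact hb ▸ negMulLog_le_of_pow_le hm0 (hlower n)
    _ = a * b * (n + 1) * y n := by push_cast; ring
end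

section
/- Let G be a simple graph with N vertices and l edges, let λ₁ be the largest eigenvalue of its adjacency matrix, let X₁,…,X_N be i.i.d. random variables with P(X_i = ±1) = 1/2 assigned to the vertices, and let S = Σ_{{i,j}∈E} X_i X_j. Then for all 0 ≤ t < 1/λ₁: E[e^{−tS}] ≤ E[e^{tS}] ≤ exp(l·t²/(2(1 − λ₁·t))). -/
/-!
Write `S = xᵀAx / 2` for the uniform `±1` vector `x`. Expanding `(xᵀAx)ᵏ` into monomials with
nonnegative coefficients, and since every monomial in `±1` variables has nonnegative mean, all
moments of `S` are nonnegative; hence so is the mean of `exp(tS) - exp(-tS)`, the first inequality.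

For the second, `E exp(xᵀMx / 2) ≤ det(1 - M)^(-1/2)` whenever `1 - M` is positive definite and
`M` has nonnegative diagonal, by induction on the dimension: averaging over `x₀` with
`cosh d ≤ exp(d² / 2)` and `exp(a / 2) ≤ (1 - a)^(-1/2)` leaves the same kind of average for the
matrix `1 - C`, where `C` is the Schur complement of the entry `(0, 0)` in `1 - M`, and
`det(1 - M) = (1 - M₀₀) det C`. For `M = tA` the determinant is `∏ₖ (1 - tμₖ)` over the eigenvalues
`μₖ`, which lie in `[-λ₁, λ₁]` because `A ≥ 0` entrywise, sum to `tr A = 0`, and have squares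
summing to `tr A² = 2l`. The bound `-log(1 - u) ≤ u + u² / (2(1 - v))` for `|u| ≤ v < 1` finishes.
-/

open Finset Matrix Real Unitary

noncomputable def boolSign (b : Bool) : ℝ := if b then 1 else -1

lemma sum_prod_boolSign_nonneg {ι κ : Type*} [Fintype ι] [DecidableEq ι] [Fintype κ]
    (q : κ → ι) : 0 ≤ ∑ b : ι → Bool, ∏ r, boolSign (b (q r)) := by
  have hfiber (b : ι → Bool) :
      ∏ r, boolSign (b (q r)) = ∏ j, boolSign (b j) ^ #{r | q r = j} := by
    rw [← Finset.prod_fiberwise univ q]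
    refine prod_congr rfl fun j _ => ?_
    rw [← prod_const]
    exact prod_congr rfl fun r hr => by rw [(mem_filter.1 hr).2]
  simp_rw [hfiber]
  rw [← Fintype.prod_sum fun j s => boolSign s ^ #{r | q r = j}]
  refine prod_nonneg fun j _ => ?_
  rcases neg_one_pow_eq_or ℝ #{r | q r = j} with h | h <;> simp [boolSign, h]

lemma dotProduct_mulVec_pow_eq {ι : Type*} [Fintype ι] (A : Matrix ι ι ℝ) (x : ι → ℝ) (k : ℕ) :
    (x ⬝ᵥ A *ᵥ x) ^ k = ∑ p : Fin k → ι × ι,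
      (∏ r, A (p r).1 (p r).2) * ∏ s, x (Sum.elim (fun r => (p r).1) (fun r => (p r).2) s) := by
  have hpairs : x ⬝ᵥ A *ᵥ x = ∑ p : ι × ι, A p.1 p.2 * (x p.1 * x p.2) := by
    simp only [dotProduct, mulVec, mul_sum, Fintype.sum_prod_type]
    exact sum_congr rfl fun i _ => sum_congr rfl fun j _ => by ring
  rw [hpairs, Fintype.sum_pow]
  refine sum_congr rfl fun p _ => ?_
  rw [Fintype.prod_sum_type, prod_mul_distrib, prod_mul_distrib]
  rfl

lemma sum_dotProduct_mulVec_pow_nonneg {ι : Type*} [Fintype ι] [DecidableEq ι]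
    (A : Matrix ι ι ℝ) (hA : ∀ i j, 0 ≤ A i j) (k : ℕ) :
    0 ≤ ∑ b : ι → Bool, (boolSign ∘ b ⬝ᵥ A *ᵥ boolSign ∘ b) ^ k := by
  simp_rw [dotProduct_mulVec_pow_eq]
  rw [sum_comm]
  refine sum_nonneg fun p _ => ?_
  rw [← mul_sum]
  exact mul_nonneg (prod_nonneg fun r _ => hA _ _) (sum_prod_boolSign_nonneg _)

lemma sum_exp_neg_le_sum_exp {α : Type*} [Fintype α] (w : α → ℝ)
    (hw : ∀ k : ℕ, 0 ≤ ∑ a, w a ^ k) :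
    ∑ a, exp (-w a) ≤ ∑ a, exp (w a) := by
  have hseries : HasSum (fun k : ℕ => (1 - (-1) ^ k) / k.factorial * ∑ a, w a ^ k)
      (∑ a, (exp (w a) - exp (-w a))) := by
    have hexp (x : ℝ) : HasSum (fun k : ℕ => x ^ k / k.factorial) (exp x) := by
      rw [exp_eq_exp_ℝ]
      exact NormedSpace.expSeries_div_hasSum_exp x
    refine (hasSum_sum fun a _ => (hexp (w a)).sub (hexp (-w a))).congr_fun fun k => ?_
    rw [mul_sum]
    exact sum_congr rfl fun a _ => by rw [neg_pow]; ring
  have hterm (k : ℕ) : 0 ≤ (1 - (-1 : ℝ) ^ k) / k.factorial * ∑ a, w a ^ k := by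
    refine mul_nonneg (div_nonneg ?_ (by positivity)) (hw k)
    rcases neg_one_pow_eq_or ℝ k with h | h <;> rw [h] <;> norm_num
  have := hasSum_le hterm hasSum_zero hseries
  rw [sum_sub_distrib] at this
  linarith

lemma dotProduct_mulVec_eq_sum_sum {ι : Type*} [Fintype ι] (A : Matrix ι ι ℝ) (x : ι → ℝ) :
    x ⬝ᵥ A *ᵥ x = ∑ i, ∑ j, A i j * x i * x j := by
  simp only [dotProduct, mulVec, mul_sum]
  exact sum_congr rfl fun i _ => sum_congr rfl fun j _ => by ring

lemma exp_half_le_inv_sqrt_one_sub {a : ℝ} (ha : a < 1) : exp (a / 2) ≤ (√(1 - a))⁻¹ := by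
  rw [← inv_inv (exp (a / 2)), ← exp_neg, ← neg_div, exp_half]
  have : 0 < 1 - a := by linarith
  gcongr
  linarith [add_one_le_exp (-a)]

lemma sum_exp_boolSign_le {a : ℝ} (ha0 : 0 ≤ a) (ha1 : a < 1) (d q : ℝ) :
    ∑ s : Bool, exp ((a + 2 * boolSign s * d + q) / 2)
      ≤ 2 / √(1 - a) * exp ((q + (1 - a)⁻¹ * d ^ 2) / 2) := by
  have hcosh : cosh d ≤ exp ((1 - a)⁻¹ * d ^ 2 / 2) := by
    refine (cosh_le_exp_half_sq d).trans (exp_le_exp.2 ?_)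
    have : 1 ≤ (1 - a)⁻¹ := one_le_inv₀ (by linarith) |>.2 (by linarith)
    gcongr
    nlinarith [sq_nonneg d]
  calc ∑ s : Bool, exp ((a + 2 * boolSign s * d + q) / 2)
      = exp (a / 2) * exp (q / 2) * (2 * cosh d) := by
        have hsplit (σ : ℝ) :
            exp ((a + 2 * σ * d + q) / 2) = exp (a / 2) * exp (q / 2) * exp (σ * d) := by
          rw [← exp_add, ← exp_add]
          ring_nf
        simp only [hsplit, Fintype.sum_bool, boolSign, if_true, Bool.false_eq_true, if_false,
          cosh_eq]
        ring_nf
    _ ≤ (√(1 - a))⁻¹ * exp (q / 2) * (2 * exp ((1 - a)⁻¹ * d ^ 2 / 2)) := by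
        gcongr
        exact exp_half_le_inv_sqrt_one_sub ha1
    _ = 2 / √(1 - a) * exp ((q + (1 - a)⁻¹ * d ^ 2) / 2) := by
        rw [add_div, exp_add]
        ring

noncomputable def schurZero {n : ℕ} (B : Matrix (Fin (n + 1)) (Fin (n + 1)) ℝ) :
    Matrix (Fin n) (Fin n) ℝ :=
  B.submatrix Fin.succ Fin.succ
    - (B 0 0)⁻¹ • vecMulVec (fun i => B i.succ 0) (fun j => B 0 j.succ)

section SchurZero
variable {n : ℕ}

lemma det_eq_mul_det_schurZero (B : Matrix (Fin (n + 1)) (Fin (n + 1)) ℝ)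
    (h : B 0 0 ≠ 0) : B.det = B 0 0 * (schurZero B).det := by
  let e : Fin n ⊕ Unit ≃ Fin (n + 1) :=
    (Equiv.optionEquivSumPUnit _).symm.trans (finSuccEquiv n).symm
  let col : Matrix (Fin n) Unit ℝ := of fun i _ => B i.succ 0
  let row : Matrix Unit (Fin n) ℝ := of fun _ j => B 0 j.succ
  let pivot : Matrix Unit Unit ℝ := of fun _ _ => B 0 0
  have hblocks : B.submatrix e e = fromBlocks (B.submatrix Fin.succ Fin.succ) col row pivot := by
    ext (i | i) (j | j) <;> simp [e, col, row, pivot]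
  let : Invertible pivot := invertibleOfRightInverse pivot ((B 0 0)⁻¹ • 1) (by
    ext; simp [pivot, h])
  have hinv : col * ⅟pivot * row
      = (B 0 0)⁻¹ • vecMulVec (fun i => B i.succ 0) (fun j => B 0 j.succ) := by
    ext i j
    simp [col, row, pivot, mul_apply, vecMulVec_apply]
    ring
  rw [← det_submatrix_equiv_self e, hblocks, det_fromBlocks₂₂, hinv, det_unique]
  rfl

lemma cons_dotProduct_mulVec_cons (B : Matrix (Fin (n + 1)) (Fin (n + 1)) ℝ) (s : ℝ)
    (y : Fin n → ℝ) :
    Fin.cons s y ⬝ᵥ B *ᵥ Fin.cons s y = B 0 0 * s ^ 2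
      + s * ((fun i => B i.succ 0) ⬝ᵥ y + (fun j => B 0 j.succ) ⬝ᵥ y)
      + y ⬝ᵥ B.submatrix Fin.succ Fin.succ *ᵥ y := by
  simp only [dotProduct, mulVec, Fin.sum_univ_succ, Fin.cons_zero, Fin.cons_succ,
    submatrix_apply, mul_add, sum_add_distrib, mul_sum]
  have : ∑ i, y i * (B i.succ 0 * s) = ∑ i, s * (B i.succ 0 * y i) :=
    sum_congr rfl fun i _ => by ring
  rw [this]
  ring

lemma dotProduct_mulVec_schurZero (B : Matrix (Fin (n + 1)) (Fin (n + 1)) ℝ) (y : Fin n → ℝ) :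
    y ⬝ᵥ schurZero B *ᵥ y = y ⬝ᵥ B.submatrix Fin.succ Fin.succ *ᵥ y
      - (B 0 0)⁻¹ * (((fun i => B i.succ 0) ⬝ᵥ y) * ((fun j => B 0 j.succ) ⬝ᵥ y)) := by
  rw [schurZero, sub_mulVec, dotProduct_sub, smul_mulVec, vecMulVec_mulVec, dotProduct_smul,
    dotProduct_smul, smul_eq_mul]
  simp [dotProduct_comm y]

lemma posDef_schurZero {B : Matrix (Fin (n + 1)) (Fin (n + 1)) ℝ} (hB : B.PosDef) :
    (schurZero B).PosDef := by
  have hsymm (i j) : B j i = B i j := by simpa using hB.1.apply i j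
  set r : Fin n → ℝ := fun j => B 0 j.succ
  have hcol : (fun i => B i.succ 0) = r := funext fun i => hsymm 0 i.succ
  refine PosDef.of_dotProduct_mulVec_pos ?_ fun y hy => ?_
  · ext i j
    simp [schurZero, hcol, r, vecMulVec_apply, hsymm i.succ, mul_comm]
  · -- the vector minimising the quadratic form of `B` in the first coordinate, where it takes
    -- the value of the quadratic form of the Schur complement
    have hx : (Fin.cons (-(B 0 0)⁻¹ * (r ⬝ᵥ y)) y : Fin (n + 1) → ℝ) ≠ 0 :=
      fun h => hy (funext fun i => by simpa using congrFun h i.succ)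
    have hpos := hB.dotProduct_mulVec_pos hx
    have hB00 : B 0 0 ≠ 0 := (hB.diag_pos (i := 0)).ne'
    simp only [star_trivial, cons_dotProduct_mulVec_cons, hcol] at hpos
    simp only [star_trivial, dotProduct_mulVec_schurZero, hcol]
    convert hpos using 1
    field_simp
    ring

lemma dotProduct_mulVec_one_sub_schurZero_one_sub (M : Matrix (Fin (n + 1)) (Fin (n + 1)) ℝ)
    (y : Fin n → ℝ) :
    y ⬝ᵥ (1 - schurZero (1 - M)) *ᵥ y = y ⬝ᵥ M.submatrix Fin.succ Fin.succ *ᵥ y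
      + (1 - M 0 0)⁻¹ * (((fun i => M i.succ 0) ⬝ᵥ y) * ((fun j => M 0 j.succ) ⬝ᵥ y)) := by
  rw [sub_mulVec, dotProduct_sub, dotProduct_mulVec_schurZero]
  have hsub : (1 - M).submatrix Fin.succ Fin.succ = 1 - M.submatrix Fin.succ Fin.succ := by
    rw [← submatrix_one _ (Fin.succ_injective n)]
    rfl
  have hrow : (fun j : Fin n => (1 - M) 0 j.succ) = -fun j => M 0 j.succ := by
    ext j
    simp [(Fin.succ_ne_zero j).symm]
  have hcol : (fun i : Fin n => (1 - M) i.succ 0) = -fun i => M i.succ 0 := by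
    ext i
    simp [Fin.succ_ne_zero i]
  rw [hrow, hcol, hsub, sub_mulVec, dotProduct_sub, one_mulVec, neg_dotProduct,
    neg_dotProduct]
  simp only [Matrix.sub_apply, one_apply_eq]
  ring

lemma one_sub_schurZero_one_sub_apply (M : Matrix (Fin (n + 1)) (Fin (n + 1)) ℝ) (i j : Fin n) :
    (1 - schurZero (1 - M)) i j = M i.succ j.succ + (1 - M 0 0)⁻¹ * (M i.succ 0 * M 0 j.succ) := by
  simp [schurZero, vecMulVec_apply, one_apply, (Fin.succ_ne_zero j).symm]
  ring

lemma sum_exp_half_dotProduct_mulVec_succ_le (M : Matrix (Fin (n + 1)) (Fin (n + 1)) ℝ)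
    (h00 : 0 ≤ M 0 0) (hpos : (1 - M).PosDef) :
    ∑ b : Fin (n + 1) → Bool, exp ((boolSign ∘ b ⬝ᵥ M *ᵥ boolSign ∘ b) / 2)
      ≤ 2 / √(1 - M 0 0) * ∑ b : Fin n → Bool,
          exp ((boolSign ∘ b ⬝ᵥ (1 - schurZero (1 - M)) *ᵥ boolSign ∘ b) / 2) := by
  have hM : M.IsHermitian := by simpa using isHermitian_one.sub hpos.1
  set r : Fin n → ℝ := fun j => M 0 j.succ
  have hcol : (fun i => M i.succ 0) = r := funext fun i => by simpa using hM.apply 0 i.succ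
  have ha : M 0 0 < 1 := by simpa using hpos.diag_pos (i := 0)
  have hq (s : Bool) (b : Fin n → Bool) :
      boolSign ∘ Fin.cons s b ⬝ᵥ M *ᵥ boolSign ∘ Fin.cons s b
        = M 0 0 + 2 * boolSign s * (r ⬝ᵥ boolSign ∘ b)
          + boolSign ∘ b ⬝ᵥ M.submatrix Fin.succ Fin.succ *ᵥ boolSign ∘ b := by
    have hs : boolSign s ^ 2 = 1 := by cases s <;> simp [boolSign]
    rw [Fin.comp_cons, cons_dotProduct_mulVec_cons, hcol, hs]
    ring
  have hq' (y : Fin n → ℝ) : y ⬝ᵥ (1 - schurZero (1 - M)) *ᵥ y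
      = y ⬝ᵥ M.submatrix Fin.succ Fin.succ *ᵥ y + (1 - M 0 0)⁻¹ * (r ⬝ᵥ y) ^ 2 := by
    rw [dotProduct_mulVec_one_sub_schurZero_one_sub, hcol, sq]
  calc ∑ b : Fin (n + 1) → Bool, exp ((boolSign ∘ b ⬝ᵥ M *ᵥ boolSign ∘ b) / 2)
      = ∑ b : Fin n → Bool, ∑ s : Bool,
          exp ((boolSign ∘ Fin.cons s b ⬝ᵥ M *ᵥ boolSign ∘ Fin.cons s b) / 2) := by
        rw [← (Fin.consEquiv fun _ => Bool).sum_comp, Fintype.sum_prod_type, sum_comm]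
        rfl
    _ ≤ ∑ b : Fin n → Bool, 2 / √(1 - M 0 0)
          * exp ((boolSign ∘ b ⬝ᵥ (1 - schurZero (1 - M)) *ᵥ boolSign ∘ b) / 2) := by
        gcongr with b
        simp only [hq, hq']
        exact sum_exp_boolSign_le h00 ha _ _
    _ = _ := (mul_sum ..).symm

end SchurZero

theorem sum_exp_half_dotProduct_mulVec_le {n : ℕ} (M : Matrix (Fin n) (Fin n) ℝ)
    (hdiag : ∀ i, 0 ≤ M i i) (hpos : (1 - M).PosDef) :
    ∑ b : Fin n → Bool, exp ((boolSign ∘ b ⬝ᵥ M *ᵥ boolSign ∘ b) / 2) ≤ 2 ^ n / √(1 - M).det := by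
  induction n with
  | zero => simp
  | succ n ih =>
    have hM : M.IsHermitian := by simpa using isHermitian_one.sub hpos.1
    have h00 : (1 - M) 0 0 = 1 - M 0 0 := by simp
    have ha : 0 < 1 - M 0 0 := h00 ▸ hpos.diag_pos
    have hdet : (1 - M).det = (1 - M 0 0) * (schurZero (1 - M)).det :=
      h00 ▸ det_eq_mul_det_schurZero (1 - M) (h00 ▸ ha.ne')
    have hdiag' (i : Fin n) : 0 ≤ (1 - schurZero (1 - M)) i i := by
      rw [one_sub_schurZero_one_sub_apply, ← hM.apply 0 i.succ, star_trivial]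
      exact add_nonneg (hdiag _) (mul_nonneg (inv_nonneg.2 ha.le) (mul_self_nonneg _))
    calc ∑ b : Fin (n + 1) → Bool, exp ((boolSign ∘ b ⬝ᵥ M *ᵥ boolSign ∘ b) / 2)
        ≤ 2 / √(1 - M 0 0) * ∑ b : Fin n → Bool,
            exp ((boolSign ∘ b ⬝ᵥ (1 - schurZero (1 - M)) *ᵥ boolSign ∘ b) / 2) :=
          sum_exp_half_dotProduct_mulVec_succ_le M (hdiag 0) hpos
      _ ≤ 2 / √(1 - M 0 0) * (2 ^ n / √(schurZero (1 - M)).det) := by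
          gcongr
          simpa using ih _ hdiag' (by simpa using posDef_schurZero hpos)
      _ = 2 ^ (n + 1) / √(1 - M).det := by
          rw [hdet, sqrt_mul ha.le, pow_succ]
          ring

lemma neg_log_one_sub_le {u v : ℝ} (hu : |u| ≤ v) (hv : v < 1) :
    -log (1 - u) ≤ u + u ^ 2 / (2 * (1 - v)) := by
  have hv0 : 0 ≤ v := (abs_nonneg u).trans hu
  have htail : HasSum (fun n : ℕ => u ^ (n + 2) / (n + 2)) (-log (1 - u) - u) := by
    have := (hasSum_nat_add_iff' 1).2 (hasSum_pow_div_log_of_abs_lt_one (hu.trans_lt hv))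
    simpa [add_assoc, one_add_one_eq_two] using this
  have hgeom : HasSum (fun n : ℕ => v ^ n * (u ^ 2 / 2)) ((1 - v)⁻¹ * (u ^ 2 / 2)) :=
    (hasSum_geometric_of_lt_one hv0 hv).mul_right _
  have hterm (n : ℕ) : u ^ (n + 2) / (n + 2) ≤ v ^ n * (u ^ 2 / 2) := by
    calc u ^ (n + 2) / (n + 2) ≤ |u| ^ (n + 2) / (n + 2) := by
          rw [← abs_pow]
          gcongr
          exact le_abs_self _
      _ ≤ |u| ^ n * u ^ 2 / 2 := by
          rw [pow_add, sq_abs]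
          gcongr
          linarith [n.cast_nonneg (α := ℝ)]
      _ ≤ v ^ n * (u ^ 2 / 2) := by
          rw [mul_div_assoc]
          gcongr
  have := hasSum_le hterm htail hgeom
  rw [inv_mul_eq_div, div_div] at this
  linarith

lemma inv_sqrt_prod_one_sub_le {ι : Type*} [Fintype ι] (u : ι → ℝ) {v : ℝ}
    (hu : ∀ i, |u i| ≤ v) (hv : v < 1) :
    (√(∏ i, (1 - u i)))⁻¹ ≤ exp ((∑ i, u i + (∑ i, u i ^ 2) / (2 * (1 - v))) / 2) := by
  have hpos (i : ι) : 0 < 1 - u i := by linarith [le_abs_self (u i), hu i]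
  rw [← exp_log (prod_pos fun i _ => hpos i), ← exp_half, ← exp_neg, exp_le_exp,
    log_prod fun i _ => (hpos i).ne']
  have := sum_le_sum fun i (_ : i ∈ univ) => neg_log_one_sub_le (hu i) hv
  rw [sum_neg_distrib, sum_add_distrib, ← sum_div] at this
  linarith

section Conj
variable {ι R : Type*} [Fintype ι] [DecidableEq ι] [CommRing R] [StarRing R]

lemma Matrix.det_conjStarAlgAut (u : unitaryGroup ι R) (X : Matrix ι ι R) :
    (conjStarAlgAut R _ u X).det = X.det := by
  rw [conjStarAlgAut_apply, det_mul, det_mul, mul_right_comm, ← det_mul,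
    mem_unitaryGroup_iff.mp u.2, det_one, one_mul]

lemma Matrix.trace_conjStarAlgAut (u : unitaryGroup ι R) (X : Matrix ι ι R) :
    (conjStarAlgAut R _ u X).trace = X.trace := by
  rw [conjStarAlgAut_apply, trace_mul_cycle, coe_star_mul_self, one_mul]

end Conj

namespace Matrix.IsHermitian
variable {ι : Type*} [Fintype ι] [DecidableEq ι] {A : Matrix ι ι ℝ} (hA : A.IsHermitian)
include hA

lemma smul_one_sub_smul_eq_conjStarAlgAut (c t : ℝ) :
    c • (1 : Matrix ι ι ℝ) - t • A = conjStarAlgAut ℝ _ hA.eigenvectorUnitary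
      (diagonal fun i => c - t * hA.eigenvalues i) := by
  conv_lhs => rw [hA.spectral_theorem]
  rw [← map_one (conjStarAlgAut ℝ _ hA.eigenvectorUnitary), ← map_smul, ← map_smul, ← map_sub]
  congr 1
  ext i j
  by_cases h : i = j <;> simp [h]

lemma det_one_sub_smul (t : ℝ) : (1 - t • A).det = ∏ i, (1 - t * hA.eigenvalues i) := by
  rw [← one_smul ℝ (1 : Matrix ι ι ℝ), hA.smul_one_sub_smul_eq_conjStarAlgAut,
    det_conjStarAlgAut, det_diagonal]

lemma posDef_one_sub_smul {t : ℝ} (ht : ∀ i, t * hA.eigenvalues i < 1) :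
    (1 - t • A).PosDef := by
  rw [← one_smul ℝ (1 : Matrix ι ι ℝ), hA.smul_one_sub_smul_eq_conjStarAlgAut,
    conjStarAlgAut_apply, isUnit_coe.posDef_star_right_conjugate_iff, posDef_diagonal_iff]
  exact fun i => sub_pos.2 (ht i)

lemma trace_mul_self_eq_sum_eigenvalues_sq : (A * A).trace = ∑ i, hA.eigenvalues i ^ 2 := by
  conv_lhs => rw [hA.spectral_theorem, ← map_mul, trace_conjStarAlgAut]
  simp [diagonal_mul_diagonal, trace_diagonal, sq]

lemma dotProduct_mulVec_le_iSup_eigenvalues (x : ι → ℝ) :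
    x ⬝ᵥ A *ᵥ x ≤ (⨆ i, hA.eigenvalues i) * (x ⬝ᵥ x) := by
  have hpsd : ((⨆ i, hA.eigenvalues i) • (1 : Matrix ι ι ℝ) - (1 : ℝ) • A).PosSemidef := by
    rw [hA.smul_one_sub_smul_eq_conjStarAlgAut, conjStarAlgAut_apply,
      isUnit_coe.posSemidef_star_right_conjugate_iff, posSemidef_diagonal_iff]
    exact fun i => by simpa using le_ciSup (Finite.bddAbove_range hA.eigenvalues) i
  have := hpsd.dotProduct_mulVec_nonneg x
  simp only [star_trivial, one_smul, sub_mulVec, smul_mulVec, one_mulVec, dotProduct_sub,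
    dotProduct_smul, smul_eq_mul] at this
  linarith

lemma abs_eigenvalues_le_iSup_of_nonneg (hA0 : ∀ i j, 0 ≤ A i j) (k : ι) :
    |hA.eigenvalues k| ≤ ⨆ i, hA.eigenvalues i := by
  refine abs_le.2 ⟨?_, le_ciSup (Finite.bddAbove_range hA.eigenvalues) k⟩
  -- `μₖ = vᵀAv ≥ -|v|ᵀA|v| ≥ -λ₁` for the unit eigenvector `v`, as `A ≥ 0` entrywise
  set v : ι → ℝ := ⇑(hA.eigenvectorBasis k)
  have hv : |v| ⬝ᵥ |v| = 1 := by
    have h := real_inner_self_eq_norm_sq (hA.eigenvectorBasis k)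
    rw [hA.eigenvectorBasis.orthonormal.1 k, EuclideanSpace.inner_eq_star_dotProduct] at h
    simpa [dotProduct, abs_mul_abs_self] using h
  have habs : -(|v| ⬝ᵥ A *ᵥ |v|) ≤ v ⬝ᵥ A *ᵥ v := by
    simp only [dotProduct, mulVec, ← sum_neg_distrib, mul_sum, Pi.abs_apply]
    gcongr with i _ j _
    have := mul_le_mul_of_nonneg_left (neg_abs_le (v i * v j)) (hA0 i j)
    rw [abs_mul] at this
    linarith
  have hupper := hA.dotProduct_mulVec_le_iSup_eigenvalues |v|
  have hk := hA.eigenvalues_eq k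
  simp only [star_trivial, RCLike.re_to_real] at hk
  rw [hv, mul_one] at hupper
  linarith

lemma sum_eigenvalues_sq : ∑ i, hA.eigenvalues i ^ 2 = ∑ i, ∑ j, A i j ^ 2 := by
  rw [← hA.trace_mul_self_eq_sum_eigenvalues_sq, trace]
  simp only [Matrix.diag, mul_apply, sq]
  refine sum_congr rfl fun i _ => sum_congr rfl fun j _ => ?_
  rw [← hA.apply j i, star_trivial]

end Matrix.IsHermitian

lemma sum_exp_neg_mul_dotProduct_mulVec_le {ι : Type*} [Fintype ι] [DecidableEq ι]
    (A : Matrix ι ι ℝ) (hA0 : ∀ i j, 0 ≤ A i j) {c : ℝ} (hc : 0 ≤ c) :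
    ∑ b : ι → Bool, exp (-(c * (boolSign ∘ b ⬝ᵥ A *ᵥ boolSign ∘ b)))
      ≤ ∑ b : ι → Bool, exp (c * (boolSign ∘ b ⬝ᵥ A *ᵥ boolSign ∘ b)) := by
  refine sum_exp_neg_le_sum_exp _ fun k => ?_
  simp only [mul_pow, ← mul_sum]
  exact mul_nonneg (pow_nonneg hc k) (sum_dotProduct_mulVec_pow_nonneg A hA0 k)

theorem sum_exp_half_mul_dotProduct_mulVec_le {n : ℕ} {A : Matrix (Fin n) (Fin n) ℝ}
    (hA : A.IsHermitian) (hA0 : ∀ i j, 0 ≤ A i j) (hdiag : ∀ i, A i i = 0) {t : ℝ}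
    (ht0 : 0 ≤ t) (ht : t * (⨆ i, hA.eigenvalues i) < 1) :
    ∑ b : Fin n → Bool, exp (t / 2 * (boolSign ∘ b ⬝ᵥ A *ᵥ boolSign ∘ b))
      ≤ 2 ^ n * exp (t ^ 2 * (∑ i, ∑ j, A i j ^ 2) / (4 * (1 - t * ⨆ i, hA.eigenvalues i))) := by
  set lam := ⨆ i, hA.eigenvalues i
  have hμ (k : Fin n) : |t * hA.eigenvalues k| ≤ t * lam := by
    rw [abs_mul, abs_of_nonneg ht0]
    exact mul_le_mul_of_nonneg_left (hA.abs_eigenvalues_le_iSup_of_nonneg hA0 k) ht0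
  have hpos : (1 - t • A).PosDef :=
    hA.posDef_one_sub_smul fun k => ((le_abs_self _).trans (hμ k)).trans_lt ht
  have htrace : ∑ k, hA.eigenvalues k = 0 := by
    simpa [trace, hdiag] using hA.trace_eq_sum_eigenvalues.symm
  calc ∑ b : Fin n → Bool, exp (t / 2 * (boolSign ∘ b ⬝ᵥ A *ᵥ boolSign ∘ b))
      = ∑ b : Fin n → Bool, exp ((boolSign ∘ b ⬝ᵥ (t • A) *ᵥ boolSign ∘ b) / 2) := by
        simp only [smul_mulVec, dotProduct_smul, smul_eq_mul]
        ring_nf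
    _ ≤ 2 ^ n / √(1 - t • A).det :=
        sum_exp_half_dotProduct_mulVec_le _ (fun i => by simp [hdiag]) hpos
    _ = 2 ^ n * (√(∏ k, (1 - t * hA.eigenvalues k)))⁻¹ := by
        rw [hA.det_one_sub_smul, div_eq_mul_inv]
    _ ≤ 2 ^ n * exp (t ^ 2 * (∑ i, ∑ j, A i j ^ 2) / (4 * (1 - t * lam))) := by
        refine mul_le_mul_of_nonneg_left ((inv_sqrt_prod_one_sub_le _ hμ ht).trans_eq ?_)
          (by positivity)
        have : 0 < 1 - t * lam := by linarith
        simp only [mul_pow, ← mul_sum, htrace, hA.sum_eigenvalues_sq]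
        congr 1
        field_simp
        ring

/-- Komlós–Paturi: bound on the moment generating function of the
quadratic form `S = ∑_{{i,j}∈E} X_i X_j` over the edges of a simple graph,
for i.i.d. uniform `±1` random variables attached to the vertices. -/
theorem komlos_paturi_mgf {N : ℕ} (A : Matrix (Fin N) (Fin N) ℝ)
    (hA : A.IsHermitian)
    (h01 : ∀ i j, A i j = 0 ∨ A i j = 1) (hdiag : ∀ i, A i i = 0)
    (lam1 l : ℝ) (hlam : lam1 = ⨆ i, hA.eigenvalues i)
    (hl : l = (∑ i, ∑ j, A i j) / 2)
    (S : (Fin N → ℝ) → ℝ) (hS : ∀ x, S x = (∑ i, ∑ j, A i j * x i * x j) / 2)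
    (E : ((Fin N → ℝ) → ℝ) → ℝ)
    (hE : ∀ f, E f = (∑ b : Fin N → Bool, f fun i => if b i then (1 : ℝ) else -1) / 2 ^ N)
    (t : ℝ) (ht0 : 0 ≤ t) (ht1 : t < 1 / lam1) :
    E (fun x => Real.exp (-(t * S x))) ≤ E (fun x => Real.exp (t * S x)) ∧
      E (fun x => Real.exp (t * S x)) ≤ Real.exp (l * t ^ 2 / (2 * (1 - lam1 * t))) := by
  have hlam_pos : 0 < lam1 := by
    by_contra! h
    exact (one_div_nonpos.2 h).not_gt (ht0.trans_lt ht1)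
  have hA0 (i j) : 0 ≤ A i j := by rcases h01 i j with h | h <;> simp [h]
  have hl' : l = (∑ i, ∑ j, A i j ^ 2) / 2 := by
    rw [hl]
    congr 1
    refine sum_congr rfl fun i _ => sum_congr rfl fun j _ => ?_
    rcases h01 i j with h | h <;> simp [h]
  have htS (x : Fin N → ℝ) : t * S x = t / 2 * (x ⬝ᵥ A *ᵥ x) := by
    rw [hS, dotProduct_mulVec_eq_sum_sum]
    ring
  simp only [hE, htS]
  constructor
  · exact div_le_div_of_nonneg_right
      (sum_exp_neg_mul_dotProduct_mulVec_le A hA0 (by positivity)) (by positivity)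
  · have htlam : t * lam1 < 1 := (lt_div_iff₀ hlam_pos).1 ht1
    have hden : 1 - lam1 * t ≠ 0 := by linarith
    subst hlam
    rw [div_le_iff₀ (by positivity), mul_comm, hl']
    refine (sum_exp_half_mul_dotProduct_mulVec_le hA hA0 hdiag ht0 htlam).trans_eq ?_
    congr 2
    field_simp
    ring
end

section
/- Let G be the graph on N vertices consisting of the disjoint union of the complete graph K_m on vertices {1,…,m} and the complete graph K_{N−m} on vertices {m+1,…,N} (with log N ≪ m ≪ N), possibly joined by a single edge. Consider the Hopfield model on G with the single stored pattern ξ¹ with ξ_i¹ = 1 for all i, and the corrupted input x̃ with x̃_i = −1 for i ≤ m and x̃_i = 1 for m+1 ≤ i ≤ N. Then T_i(x̃) = x̃_i for every i, i.e. x̃ is a fixed point of the parallel dynamics T, so the retrieval dynamics cannot correct the m errors. -/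
open scoped BigOperators

/-- Sign function with the convention `sgn 0 = 1`. -/
noncomputable def sgn (x : ℝ) : ℝ := if 0 ≤ x then 1 else -1

/-- The parallel retrieval dynamics of the Hopfield model with adjacency matrix `A`
and patterns `ξ`: `T_i(σ) = sgn(∑_j σ_j a_{ij} ∑_μ ξ_i^μ ξ_j^μ)`. -/
noncomputable def hopT {N M : ℕ} (A : Matrix (Fin N) (Fin N) ℝ)
    (ξ : Fin M → Fin N → ℝ) (σ : Fin N → ℝ) : Fin N → ℝ :=
  fun i => sgn (∑ j, σ j * A i j * ∑ μ, ξ μ i * ξ μ j)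

/-!
With the single pattern `ξ¹ ≡ 1` the local field at `i` is `h_i = ∑_j x̃_j a_ij`. Inside a clique
all spins of `x̃` agree, so `x̃_i h_i` gains `1` from every other vertex of the clique of `i` and
loses at most `1` through the connecting edge: `x̃_i h_i ≥ |clique of i| - 2`. Once both cliques
have at least three vertices, which `log N ≪ m ≪ N` guarantees for large `N`, every local field
has the sign of `x̃_i`, and `x̃` is fixed by `T`.
-/

open Filter Topology Finset

lemma sgn_eq_of_pos_mul {s x : ℝ} (hs : s = 1 ∨ s = -1) (h : 0 < s * x) : sgn x = s := by
  rcases hs with rfl | rfl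
  · rw [sgn, if_pos (by linarith)]
  · rw [sgn, if_neg (by linarith)]

lemma hopT_const_one_pattern {N : ℕ} (A : Matrix (Fin N) (Fin N) ℝ) (σ : Fin N → ℝ) (i : Fin N) :
    hopT A (fun _ : Fin 1 => fun _ => (1 : ℝ)) σ i = sgn (∑ j, σ j * A i j) := by
  simp [hopT]

lemma card_block_sub_two_le_mul_field {ι : Type*} [Fintype ι] [DecidableEq ι] {p : ι → Prop}
    [DecidablePred p] {i k : ι} {a w σ : ι → ℝ}
    (ha : ∀ j, a j = if i = j then 0 else if (p i ↔ p j) then 1 else w j)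
    (hw : ∀ j, w j ≤ if j = k then 1 else 0) (hσ : ∀ j, σ j = if p j then -1 else 1) :
    (#{j | p i ↔ p j} : ℝ) - 2 ≤ σ i * ∑ j, σ j * a j := by
  have hterm : ∀ j, ((if (p i ↔ p j) then 1 else 0) - (if j = i then 1 else 0)
      - (if j = k then 1 else 0) : ℝ) ≤ σ i * (σ j * a j) := by
    intro j
    have hwj := hw j
    rw [hσ i, hσ j, ha j]
    by_cases hij : i = j
    · subst hij; split_ifs <;> simp_all
    · by_cases hpi : p i <;> by_cases hpj : p j <;> split_ifs at hwj ⊢ <;> simp_all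
  calc (#{j | p i ↔ p j} : ℝ) - 2
      = ∑ j, ((if (p i ↔ p j) then 1 else 0) - (if j = i then 1 else 0)
          - (if j = k then 1 else 0) : ℝ) := by
        simp only [sum_sub_distrib, sum_boole, filter_eq', mem_univ, if_true,
          card_singleton, Nat.cast_one]
        ring
    _ ≤ ∑ j, σ i * (σ j * a j) := sum_le_sum fun j _ => hterm j
    _ = σ i * ∑ j, σ j * a j := (mul_sum _ _ _).symm

lemma single_edge_le_partner {ι : Type*} [DecidableEq ι] (b : Prop) [Decidable b] (u v i j : ι) :
    (if b ∧ ((i = u ∧ j = v) ∨ (i = v ∧ j = u)) then (1 : ℝ) else 0)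
      ≤ if j = (if i = u then v else u) then 1 else 0 := by
  split_ifs <;> grind

lemma three_le_card_block {N m : ℕ} (hm : 3 ≤ m) (hmN : m + 3 ≤ N) (i : Fin N) :
    3 ≤ #{j : Fin N | (i : ℕ) < m ↔ (j : ℕ) < m} := by
  by_cases hi : (i : ℕ) < m
  · simp only [hi, true_iff, Fin.card_filter_val_lt]
    omega
  · simp only [hi, false_iff]
    rw [filter_not, card_sdiff_of_subset (filter_subset _ _), Fin.card_filter_val_lt, card_univ,
      Fintype.card_fin]
    omega

lemma two_cliques_hopT_eq {N m : ℕ} (hm : 3 ≤ m) (hmN : m + 3 ≤ N) (u v : Fin N) (ex : Bool)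
    (A : Matrix (Fin N) (Fin N) ℝ)
    (hA : ∀ i j, A i j =
      if i = j then 0
      else if ((i : ℕ) < m ↔ (j : ℕ) < m) then 1
      else if ex = true ∧ ((i = u ∧ j = v) ∨ (i = v ∧ j = u)) then 1 else 0)
    (xt : Fin N → ℝ) (hxt : ∀ i, xt i = if (i : ℕ) < m then -1 else 1) (i : Fin N) :
    hopT A (fun _ : Fin 1 => fun _ => (1 : ℝ)) xt i = xt i := by
  rw [hopT_const_one_pattern]
  refine sgn_eq_of_pos_mul (by rw [hxt]; split_ifs <;> simp) ?_
  have hfield := card_block_sub_two_le_mul_field (hA i)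
    (single_edge_le_partner (ex = true) u v i) hxt
  have hcard : (3 : ℝ) ≤ #{j : Fin N | (i : ℕ) < m ↔ (j : ℕ) < m} := by
    exact_mod_cast three_le_card_block hm hmN i
  linarith

lemma tendsto_atTop_of_div_log_tendsto_atTop {f : ℕ → ℝ}
    (h : Tendsto (fun N : ℕ => f N / Real.log N) atTop atTop) : Tendsto f atTop atTop := by
  have hlog : Tendsto (fun N : ℕ => Real.log N) atTop atTop :=
    Real.tendsto_log_atTop.comp tendsto_natCast_atTop_atTop
  refine (h.atTop_mul_atTop₀ hlog).congr' ?_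
  filter_upwards [hlog.eventually_gt_atTop 0] with N hN
  field_simp

lemma tendsto_sub_atTop_of_div_tendsto_zero {f : ℕ → ℝ}
    (h : Tendsto (fun N : ℕ => f N / N) atTop (𝓝 0)) :
    Tendsto (fun N : ℕ => (N : ℝ) - f N) atTop atTop := by
  have hone : Tendsto (fun N : ℕ => 1 - f N / N) atTop (𝓝 1) := by
    simpa using tendsto_const_nhds.sub h
  refine (tendsto_natCast_atTop_atTop.atTop_mul_pos one_pos hone).congr' ?_
  filter_upwards [eventually_gt_atTop 0] with N hN
  field_simp

/-- on the union of two cliques `K_m` (vertices `< m`) and `K_{N−m}`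
(vertices `≥ m`), with `log N ≪ m ≪ N`, possibly joined by one edge `{u,v}`, storing
the single pattern `ξ¹ ≡ 1`, the corrupted input `x̃` (equal to `−1` on the first
clique and `+1` on the second) is a fixed point of the parallel dynamics `T`, so the
retrieval dynamics cannot correct the `m` errors. -/
theorem two_cliques_no_error_correction (m : ℕ → ℕ)
    (hlog : Filter.Tendsto (fun N : ℕ => (m N : ℝ) / Real.log N) Filter.atTop Filter.atTop)
    (hN : Filter.Tendsto (fun N : ℕ => (m N : ℝ) / N) Filter.atTop (nhds 0)) :
    ∀ᶠ N : ℕ in Filter.atTop,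
      ∀ u v : Fin N, (u : ℕ) < m N → m N ≤ (v : ℕ) →
      ∀ ex : Bool,
      ∀ A : Matrix (Fin N) (Fin N) ℝ,
        (∀ i j, A i j =
          if i = j then 0
          else if ((i : ℕ) < m N ↔ (j : ℕ) < m N) then 1
          else if ex = true ∧ ((i = u ∧ j = v) ∨ (i = v ∧ j = u)) then 1 else 0) →
      ∀ xt : Fin N → ℝ, (∀ i, xt i = if (i : ℕ) < m N then -1 else 1) →
      ∀ i, hopT A (fun _ : Fin 1 => fun _ => (1 : ℝ)) xt i = xt i := by
  filter_upwards [(tendsto_atTop_of_div_log_tendsto_atTop hlog).eventually_ge_atTop 3,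
    (tendsto_sub_atTop_of_div_tendsto_zero hN).eventually_ge_atTop 3] with N hm hmN
  have hm' : 3 ≤ m N := by exact_mod_cast hm
  have hmN' : m N + 3 ≤ N := by
    have : (m N : ℝ) + 3 ≤ N := by linarith
    exact_mod_cast this
  intro u v _ _ ex A hA xt hxt i
  exact two_cliques_hopT_eq hm' hmN' u v ex A hA xt hxt i
end

section
/- Let (x_n) satisfy x_{n+1} = c·x_n·h(x_n) with c > 0, where h(x) = −x·log x − (1−x)·log(1−x). If x₀ ∈ (0,1/2] is small enough, then x_{n+1} ≤ (C·x_n)^{3/2} for some constant C > 0 (using h(x) ≤ −2x·log x ≤ 2√x on [0,1/2]), hence x_n ≤ (C³·x₀)^{(3/2)^n}, and consequently x_n < 1/N whenever n ≥ c₂·log log N for some constant c₂ > 0. -/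
/-!
Since `-x log x = 2√x · (-√x log √x) ≤ 2√x (1 - √x)` and `-(1-x) log (1-x) ≤ x`, the entropy
satisfies `h(x) ≤ 2√x`, so `x_{n+1} ≤ 2c · x_n^{3/2} ≤ (C x_n)^{3/2}` once `C ≥ max 1 (2c)`.
Rescaling by `C³` turns this into `z_{n+1} ≤ z_n^{3/2}` for `z_n = C³ x_n`, which iterates to
`z_n ≤ z_0^{(3/2)^n}`. If `z_0 < e⁻¹`, then `z_0^{(3/2)^n} < exp(-(3/2)^n) ≤ 1/N` as soon as
`(3/2)^n ≥ log N`, i.e. `n ≥ log log N / log (3/2)`.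
-/

/-- The entropy function `h(x) = −x log x − (1−x) log(1−x)`. -/
noncomputable def ent (x : ℝ) : ℝ := -x * Real.log x - (1 - x) * Real.log (1 - x)

open Real

lemma ent_eq_negMulLog_add (x : ℝ) : ent x = negMulLog x + negMulLog (1 - x) := by
  simp only [ent, negMulLog]
  ring

lemma negMulLog_le_two_mul_sqrt_sub {x : ℝ} (hx : 0 ≤ x) : negMulLog x ≤ 2 * (√x - x) :=
  calc negMulLog x = 2 * √x * negMulLog √x := by
        conv_lhs => rw [← mul_self_sqrt hx, negMulLog_mul]
        ring
    _ ≤ 2 * √x * (1 - √x) := by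
        gcongr
        exact negMulLog_le_one_sub_self (sqrt_nonneg x)
    _ = 2 * (√x - x) := by linear_combination (-2) * mul_self_sqrt hx

lemma ent_le_two_mul_sqrt {x : ℝ} (hx0 : 0 ≤ x) (hx1 : x ≤ 1) : ent x ≤ 2 * √x := by
  have h₁ := negMulLog_le_two_mul_sqrt_sub hx0
  have h₂ := negMulLog_le_one_sub_self (sub_nonneg.2 hx1)
  rw [ent_eq_negMulLog_add]
  linarith

lemma rpow_three_halves {x : ℝ} (hx : 0 ≤ x) : x ^ (3 / 2 : ℝ) = x * √x := by
  rw [show (3 / 2 : ℝ) = 1 + 1 / 2 by norm_num, rpow_add' hx (by norm_num), rpow_one,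
    ← sqrt_eq_rpow]

lemma mul_mul_ent_le_rpow {c C x : ℝ} (hc : 0 ≤ c) (hC1 : 1 ≤ C) (hcC : 2 * c ≤ C)
    (hx0 : 0 ≤ x) (hx1 : x ≤ 1) : c * x * ent x ≤ (C * x) ^ (3 / 2 : ℝ) := by
  have hC : 2 * c ≤ C ^ (3 / 2 : ℝ) :=
    hcC.trans (self_le_rpow_of_one_le hC1 (by norm_num))
  calc c * x * ent x ≤ c * x * (2 * √x) := by
        gcongr
        exact ent_le_two_mul_sqrt hx0 hx1
    _ = 2 * c * (x * √x) := by ring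
    _ ≤ C ^ (3 / 2 : ℝ) * x ^ (3 / 2 : ℝ) := by
        rw [rpow_three_halves hx0]
        gcongr
    _ = (C * x) ^ (3 / 2 : ℝ) := (mul_rpow (by linarith) hx0).symm

lemma pow_three_mul_rpow_three_halves {C y : ℝ} (hC : 0 ≤ C) (hy : 0 ≤ y) :
    C ^ 3 * (C * y) ^ (3 / 2 : ℝ) = (C ^ 3 * y) ^ (3 / 2 : ℝ) := by
  have hC3 : (C ^ 3) ^ (3 / 2 : ℝ) = C ^ 3 * C ^ (3 / 2 : ℝ) := by
    rw [← rpow_natCast, ← rpow_mul hC, ← rpow_add' hC (by norm_num)]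
    norm_num
  rw [mul_rpow hC hy, mul_rpow (by positivity) hy, hC3]
  ring

lemma le_rpow_pow_of_succ_le_rpow {z : ℕ → ℝ} {p : ℝ} (hz : ∀ n, 0 ≤ z n) (hp : 0 ≤ p)
    (h : ∀ n, z (n + 1) ≤ z n ^ p) (n : ℕ) : z n ≤ z 0 ^ (p ^ n) := by
  induction n with
  | zero => simp
  | succ n ih =>
    calc z (n + 1) ≤ z n ^ p := h n
      _ ≤ (z 0 ^ (p ^ n)) ^ p := rpow_le_rpow (hz n) ih hp
      _ = z 0 ^ (p ^ (n + 1)) := by rw [← rpow_mul (hz 0), pow_succ]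

lemma log_le_pow_of_log_log_le {N b : ℝ} {n : ℕ} (hN : 1 < N) (hb : 0 < b)
    (h : log (log N) ≤ n * log b) : log N ≤ b ^ n :=
  (log_le_log_iff (log_pos hN) (pow_pos hb n)).1 (by rwa [log_pow])

lemma rpow_lt_inv_of_log_le {z t N : ℝ} (hz0 : 0 ≤ z) (hz : z < exp (-1)) (ht : 0 < t)
    (hN : 0 < N) (hNt : log N ≤ t) : z ^ t < N⁻¹ :=
  calc z ^ t < exp (-1) ^ t := rpow_lt_rpow hz0 hz ht
    _ = exp (-t) := by rw [← exp_mul, neg_one_mul]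
    _ ≤ exp (-log N) := exp_le_exp.2 (neg_le_neg hNt)
    _ = N⁻¹ := by rw [exp_neg, exp_log hN]

/-- for the sequence `x_{n+1} = c·x_n·h(x_n)` with values in `(0,1/2]`
and `x₀` small enough, one has `x_{n+1} ≤ (C·x_n)^{3/2}` for some `C > 0`, hence
`x_n ≤ (C³·x₀)^{(3/2)^n}`, and consequently `x_n < 1/N` whenever
`n ≥ c₂·log log N`, for some constant `c₂ > 0`. -/
theorem x_sequence (c : ℝ) (hc : 0 < c) :
    ∃ ε > (0 : ℝ), ∃ C > (0 : ℝ), ∃ c₂ > (0 : ℝ),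
      ∀ x : ℕ → ℝ, (∀ n, 0 < x n ∧ x n ≤ 1 / 2) →
        (∀ n, x (n + 1) = c * x n * ent (x n)) → x 0 ≤ ε →
        (∀ n, x (n + 1) ≤ (C * x n) ^ ((3 : ℝ) / 2)) ∧
        (∀ n : ℕ, x n ≤ (C ^ 3 * x 0) ^ (((3 : ℝ) / 2) ^ n)) ∧
        ∀ N : ℕ, 2 ≤ N → ∀ n : ℕ, (n : ℝ) ≥ c₂ * Real.log (Real.log N) → x n < 1 / N := by
  set C : ℝ := max 1 (2 * c)
  have hC1 : 1 ≤ C := le_max_left _ _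
  have hC0 : 0 ≤ C := zero_le_one.trans hC1
  refine ⟨exp (-2) / C ^ 3, by positivity, C, by positivity, (log (3 / 2))⁻¹,
    inv_pos.2 (log_pos (by norm_num)), fun x hx hrec hx0 => ?_⟩
  have hstep (n : ℕ) : x (n + 1) ≤ (C * x n) ^ (3 / 2 : ℝ) := (hrec n).trans_le <|
    mul_mul_ent_le_rpow hc.le hC1 (le_max_right _ _) (hx n).1.le ((hx n).2.trans (by norm_num))
  have hscaled : ∀ n, C ^ 3 * x n ≤ (C ^ 3 * x 0) ^ ((3 / 2 : ℝ) ^ n) :=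
    le_rpow_pow_of_succ_le_rpow (fun n => mul_nonneg (by positivity) (hx n).1.le) (by norm_num)
      fun n => by
        rw [← pow_three_mul_rpow_three_halves hC0 (hx n).1.le]
        gcongr
        exact hstep n
  have hbound (n : ℕ) : x n ≤ (C ^ 3 * x 0) ^ ((3 / 2 : ℝ) ^ n) :=
    (le_mul_of_one_le_left (hx n).1.le (one_le_pow₀ hC1)).trans (hscaled n)
  have hz0 : C ^ 3 * x 0 < exp (-1) :=
    calc C ^ 3 * x 0 ≤ exp (-2) := by rwa [le_div_iff₀' (by positivity)] at hx0
      _ < exp (-1) := exp_lt_exp.2 (by norm_num)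
  refine ⟨hstep, hbound, fun N hN n hn => ?_⟩
  have hN1 : (1 : ℝ) < N := by exact_mod_cast hN
  have hlog : log (log N) ≤ n * log (3 / 2) := by
    rwa [ge_iff_le, inv_mul_le_iff₀ (log_pos (by norm_num)), mul_comm] at hn
  rw [one_div]
  exact (hbound n).trans_lt <| rpow_lt_inv_of_log_le (mul_nonneg (by positivity) (hx 0).1.le)
    hz0 (by positivity) (by positivity) (log_le_pow_of_log_log_le hN1 (by norm_num) hlog)
end
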